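/- For n = 2, let I₂ := J_{01} + J_{12} be the ideal of T₂ = B ⊗_R B ⊗_R B defining the diagonal. Then one has the chain of inclusions of ideals I₂³ ⊆ J^{(2)}_{02} ⊆ J^{⟨2⟩}_{02} ⊆ I₂². -/

import Mathlib

open scoped TensorProduct
open PiTensorProduct

noncomputable section

variable (R B : Type*) [CommRing R] [CommRing B] [Algebra R B]

/-- The `(n+1)`-fold tensor power `B ⊗_R ⋯ ⊗_R B`, with factors indexed by `Fin (n+1)`. -/
abbrev TT (n : ℕ) : Type _ := ⨂[R] _ : Fin (n + 1), B

/-- `d^{r,s} b = (1 ⊗ ⋯ ⊗ b ⊗ ⋯ ⊗ 1) - (1 ⊗ ⋯ ⊗ b ⊗ ⋯ ⊗ 1)`, with `b` in position `s`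
(resp. `r`) in the two elementary tensors. -/
def dd (n : ℕ) (r s : Fin (n + 1)) (b : B) : TT R B n :=
  tprod R (fun i => if i = s then b else 1) - tprod R (fun i => if i = r then b else 1)

/-- The ideal `J_{rs}` generated by the elements `d^{r,s} b`. -/
def Jrs (n : ℕ) (r s : Fin (n + 1)) : Ideal (TT R B n) :=
  Ideal.span {x | ∃ b : B, x = dd R B n r s b}

/-- The ideal `J^{(2)}_{0n} = Σ_{0 ≤ r < s ≤ n} J_{rs}²`. -/
def Jsq (n : ℕ) : Ideal (TT R B n) :=
  ⨆ (r : Fin (n + 1)) (s : Fin (n + 1)) (_ : r < s), (Jrs R B n r s) ^ 2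

/-- The image `J̃_{rs}` of the ideal `J_{rs}` in the quotient ring `T_n / J^{(2)}_{0n}`. -/
def Jt (n : ℕ) (r s : Fin (n + 1)) : Ideal (TT R B n ⧸ Jsq R B n) :=
  (Jrs R B n r s).map (Ideal.Quotient.mk (Jsq R B n))

/-- The ideal `J_n` generated by the products `d^{0,r}b · d^{0,s}b` for `1 ≤ r < s ≤ n`. -/
def Jdiag (n : ℕ) : Ideal (TT R B n) :=
  Ideal.span {x | ∃ (r s : Fin (n + 1)) (b : B),
    0 < r ∧ r < s ∧ x = dd R B n 0 r b * dd R B n 0 s b}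

/-- The ideal `J^{⟨2⟩}_{0n} = J^{(2)}_{0n} + J_n`. -/
def Jsq' (n : ℕ) : Ideal (TT R B n) := Jsq R B n + Jdiag R B n

/-- The image `J̃_{rs}` of the ideal `J_{rs}` in the quotient ring `T_n / J^{⟨2⟩}_{0n}`. -/
def Jt' (n : ℕ) (r s : Fin (n + 1)) : Ideal (TT R B n ⧸ Jsq' R B n) :=
  (Jrs R B n r s).map (Ideal.Quotient.mk (Jsq' R B n))

set_option maxHeartbeats 1000000 in
theorem cube_le_sq_add_sq {T : Type*} [CommRing T] (A B : Ideal T) :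
    (A + B) ^ 3 ≤ A ^ 2 + B ^ 2 := by
  have h2 : (A + B) ^ 2 ≤ A ^ 2 + B ^ 2 + A * B := by
    rw [pow_two, add_mul, mul_add, mul_add, pow_two, pow_two]
    calc A * A + A * B + (B * A + B * B)
        = A * A + B * B + (A * B + A * B) := by ring
      _ ≤ A * A + B * B + A * B := by simp [Ideal.add_eq_sup]
  have hA : A ^ 2 * (A + B) ≤ A ^ 2 + B ^ 2 := le_trans Ideal.mul_le_left le_sup_left
  have hB : B ^ 2 * (A + B) ≤ A ^ 2 + B ^ 2 := le_trans Ideal.mul_le_left le_sup_right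
  have h1 : A ^ 2 * B ≤ A ^ 2 + B ^ 2 := le_trans Ideal.mul_le_left le_sup_left
  have h2' : B ^ 2 * A ≤ A ^ 2 + B ^ 2 := le_trans Ideal.mul_le_left le_sup_right
  calc (A + B) ^ 3 = (A + B) ^ 2 * (A + B) := by ring
    _ ≤ (A ^ 2 + B ^ 2 + A * B) * (A + B) := Ideal.mul_mono_left h2
    _ = A ^ 2 * (A + B) + B ^ 2 * (A + B) + (A ^ 2 * B + B ^ 2 * A) := by ring
    _ ≤ A ^ 2 + B ^ 2 := sup_le (sup_le hA hB) (sup_le h1 h2')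

theorem dd_mem (n : ℕ) (r s : Fin (n + 1)) (b : B) : dd R B n r s b ∈ Jrs R B n r s :=
  Ideal.subset_span ⟨b, rfl⟩

theorem dd_split (b : B) : dd R B 2 0 2 b = dd R B 2 0 1 b + dd R B 2 1 2 b := by
  unfold dd; abel

theorem Jrs_le (r s : Fin 3) (h : r < s) :
    Jrs R B 2 r s ≤ Jrs R B 2 0 1 + Jrs R B 2 1 2 := by
  have h' : r.val < s.val := h
  have h2 := r.isLt
  have h3 := s.isLt
  have hv : (r = 0 ∧ s = 1) ∨ (r = 0 ∧ s = 2) ∨ (r = 1 ∧ s = 2) := by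
    simp only [Fin.ext_iff]
    omega
  rcases hv with ⟨rfl, rfl⟩ | ⟨rfl, rfl⟩ | ⟨rfl, rfl⟩
  · exact le_sup_left
  · rw [Jrs, Ideal.span_le]
    rintro x ⟨b, rfl⟩
    rw [dd_split]
    exact add_mem
      ((le_sup_left : Jrs R B 2 0 1 ≤ Jrs R B 2 0 1 ⊔ Jrs R B 2 1 2) (dd_mem R B 2 0 1 b))
      ((le_sup_right : Jrs R B 2 1 2 ≤ Jrs R B 2 0 1 ⊔ Jrs R B 2 1 2) (dd_mem R B 2 1 2 b))
  · exact le_sup_right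

/-- for `n = 2`, with `I₂ := J_{01} + J_{12}` the ideal of the diagonal in
`T₂ = B ⊗_R B ⊗_R B`, one has `I₂³ ⊆ J^{(2)}_{02} ⊆ J^{⟨2⟩}_{02} ⊆ I₂²`. -/
theorem stmt14 :
    (Jrs R B 2 0 1 + Jrs R B 2 1 2) ^ 3 ≤ Jsq R B 2 ∧
      Jsq R B 2 ≤ Jsq' R B 2 ∧
      Jsq' R B 2 ≤ (Jrs R B 2 0 1 + Jrs R B 2 1 2) ^ 2 := by
  set I := Jrs R B 2 0 1 + Jrs R B 2 1 2 with hI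
  have hsq_le : Jsq R B 2 ≤ I ^ 2 := by
    rw [Jsq]
    refine iSup_le fun r => iSup_le fun s => iSup_le fun h => ?_
    rw [pow_two, pow_two]
    exact Ideal.mul_mono (Jrs_le R B r s h) (Jrs_le R B r s h)
  refine ⟨?_, ?_, ?_⟩
  · refine le_trans (cube_le_sq_add_sq _ _) (sup_le ?_ ?_)
    · rw [Jsq]
      exact le_iSup_of_le 0 (le_iSup_of_le 1 (le_iSup_of_le (by decide) le_rfl))
    · rw [Jsq]
      exact le_iSup_of_le 1 (le_iSup_of_le 2 (le_iSup_of_le (by decide) le_rfl))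
  · rw [Jsq']; exact le_sup_left
  · rw [Jsq']
    refine sup_le hsq_le ?_
    rw [Jdiag, Ideal.span_le]
    rintro x ⟨r, s, b, hr, hrs, rfl⟩
    rw [pow_two]
    exact Ideal.mul_mem_mul (Jrs_le R B 0 r hr (dd_mem R B 2 0 r b))
      (Jrs_le R B 0 s (lt_trans hr hrs) (dd_mem R B 2 0 s b))


end
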